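/- arXiv:1611.09104 — 5 statements merged into one kernel-verified Lean document; each statement's English description precedes it below -/
import Mathlib

section
/- Let G be a finite directed acyclic graph with source s, and let A be a subset of edges. If CUT_A is a minimum cut between s and A (a minimum-capacity edge set whose removal disconnects s from every edge of A), then CUT_A is regular, i.e., the minimum cut capacity between s and CUT_A equals |CUT_A|. -/
open Finset

/-- Consecutive edges in the list match head-to-tail. -/
def EChain {V E : Type*} (tl hd : E → V) (p : List E) : Prop :=
  p.Chain' (fun d e => hd d = tl e)

/-- A (nonempty) directed path of edges starting at node `s`. -/
def PathFrom {V E : Type*} (tl hd : E → V) (s : V) (p : List E) : Prop :=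
  p ≠ [] ∧ EChain tl hd p ∧ ∀ e ∈ p.head?, tl e = s

/-- The directed graph is acyclic: no nonempty edge-chain returns to its start. -/
def Acyclic {V E : Type*} (tl hd : E → V) : Prop :=
  ∀ p : List E, p ≠ [] → EChain tl hd p →
    ∀ d ∈ p.head?, ∀ e ∈ p.getLast?, hd e ≠ tl d

/-- `B` separates the edge set `A` from `s`: every directed path from `s`
ending with an edge of `A` passes through an edge of `B` (i.e. `B` is a cut
between `s` and `A`). -/
def Separates {V E : Type*} (tl hd : E → V) (s : V) (A B : Finset E) : Prop :=
  ∀ p : List E, PathFrom tl hd s p → (∃ e ∈ p.getLast?, e ∈ A) → ∃ b ∈ B, b ∈ p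

/-- The minimum cut capacity between `s` and the edge set `A`. -/
noncomputable def mincut {V E : Type*} [Fintype E] (tl hd : E → V) (s : V)
    (A : Finset E) : ℕ :=
  sInf {n | ∃ B : Finset E, Separates tl hd s A B ∧ B.card = n}

/-- `B` is a minimum cut between `s` and the edge set `A`. -/
def IsMinCut {V E : Type*} [Fintype E] (tl hd : E → V) (s : V) (A B : Finset E) : Prop :=
  Separates tl hd s A B ∧ B.card = mincut tl hd s A

/-- An edge set is regular if its cardinality equals its minimum cut capacity from `s`. -/
def Regular {V E : Type*} [Fintype E] (tl hd : E → V) (s : V) (A : Finset E) : Prop :=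
  A.card = mincut tl hd s A

/-- `A ∼ A'`: the two edge sets have a common minimum cut from `s`. -/
def EquivSets {V E : Type*} [Fintype E] (tl hd : E → V) (s : V) (A A' : Finset E) : Prop :=
  ∃ C : Finset E, IsMinCut tl hd s A C ∧ IsMinCut tl hd s A' C

/-- `A₁ ≺ A₂`: `|A₁| < |A₂|` and some minimum cut between `s` and `A₂`
also separates `A₁` from `s`. -/
def Dominates {V E : Type*} [Fintype E] (tl hd : E → V) (s : V) (A₁ A₂ : Finset E) : Prop :=
  A₁.card < A₂.card ∧
    ∃ C : Finset E, IsMinCut tl hd s A₂ C ∧ Separates tl hd s A₁ C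

/-- A directed path of edges from node `s` to node `t`. -/
def NPathFromTo {V E : Type*} (tl hd : E → V) (s t : V) (p : List E) : Prop :=
  PathFrom tl hd s p ∧ ∀ e ∈ p.getLast?, hd e = t

/-- `B` is a cut between the nodes `s` and `t`. -/
def NSeparates {V E : Type*} (tl hd : E → V) (s t : V) (B : Finset E) : Prop :=
  ∀ p : List E, NPathFromTo tl hd s t p → ∃ b ∈ B, b ∈ p

/-- The minimum cut capacity between the nodes `s` and `t`. -/
noncomputable def nmincut {V E : Type*} [Fintype E] (tl hd : E → V) (s t : V) : ℕ :=
  sInf {n | ∃ B : Finset E, NSeparates tl hd s t B ∧ B.card = n}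

/-- `B` is a minimum cut between the nodes `s` and `t`. -/
def IsNodeMinCut {V E : Type*} [Fintype E] (tl hd : E → V) (s t : V) (B : Finset E) : Prop :=
  NSeparates tl hd s t B ∧ B.card = nmincut tl hd s t

/-- `d ≤ e` for edges: there is a directed path starting with `d` and ending with `e`
(in particular `d ≤ d`). -/
def EdgeLe {V E : Type*} (tl hd : E → V) (d e : E) : Prop :=
  ∃ p : List E, EChain tl hd p ∧ p.head? = some d ∧ p.getLast? = some e

/-- A family of pairwise edge-disjoint paths. -/
def EdgeDisjoint {E : Type*} {n : ℕ} (P : Fin n → List E) : Prop :=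
  ∀ i j, i ≠ j → List.Disjoint (P i) (P j)

/-- The primary minimum cut between nodes `s` and `t`: a minimum cut separating
every minimum cut between `s` and `t` from `s`. -/
def IsPrimaryNodeMinCut {V E : Type*} [Fintype E] (tl hd : E → V) (s t : V)
    (C : Finset E) : Prop :=
  IsNodeMinCut tl hd s t C ∧
    ∀ C' : Finset E, IsNodeMinCut tl hd s t C' → Separates tl hd s C' C

/-- The primary minimum cut between `s` and an edge set `A`. -/
def IsPrimaryMinCut {V E : Type*} [Fintype E] (tl hd : E → V) (s : V)
    (A C : Finset E) : Prop :=
  IsMinCut tl hd s A C ∧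
    ∀ C' : Finset E, IsMinCut tl hd s A C' → Separates tl hd s C' C

/-- The equivalence class (within the collection `𝒜`) of the wiretap set `A`
under the relation `∼`. -/
def ClassOf {V E : Type*} [Fintype E] (tl hd : E → V) (s : V)
    (𝒜 : Finset (Finset E)) (A : Finset E) : Set (Finset E) :=
  {A' | A' ∈ 𝒜 ∧ EquivSets tl hd s A A'}

/-- Domination amongst (distinct) equivalence classes: some common minimum cut of all
the sets in `C₂` separates every set in `C₁` from `s`. -/
def ClDominates {V E : Type*} [Fintype E] (tl hd : E → V) (s : V)
    (C₁ C₂ : Set (Finset E)) : Prop :=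
  C₁ ≠ C₂ ∧ ∃ CUT : Finset E,
    (∀ A ∈ C₂, IsMinCut tl hd s A CUT) ∧ (∀ A ∈ C₁, Separates tl hd s A CUT)

/-- a minimum cut between `s` and an edge set `A` is regular. -/
theorem minCut_regular {V E : Type*} [Fintype E] (tl hd : E → V) (s : V)
    (hacy : Acyclic tl hd) (hsrc : ∀ e : E, hd e ≠ s)
    (A CUT_A : Finset E) (h : IsMinCut tl hd s A CUT_A) :
    Regular tl hd s CUT_A := by
  obtain ⟨hsep, hcard⟩ := h
  -- Any cut separating CUT_A from s also separates A from s.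
  have key : ∀ B : Finset E, Separates tl hd s CUT_A B → Separates tl hd s A B := by
    intro B hB p hp hlast
    obtain ⟨b, hbC, hbp⟩ := hsep p hp hlast
    obtain ⟨q, r, rfl⟩ := List.append_of_mem hbp
    have hpe : (q ++ [b] : List E) ≠ [] := by simp
    have hch : EChain tl hd (q ++ [b]) := by
      have := hp.2.1
      rw [show q ++ b :: r = (q ++ [b]) ++ r by simp] at this
      exact (List.isChain_append.mp this).1
    have hhead : (q ++ [b]).head? = (q ++ b :: r).head? := by
      cases q with
      | nil => rfl
      | cons a q' => simp
    have hpath : PathFrom tl hd s (q ++ [b]) := by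
      refine ⟨hpe, hch, ?_⟩
      intro e he
      exact hp.2.2 e (by rw [← hhead]; exact he)
    have hlast' : ∃ e ∈ (q ++ [b]).getLast?, e ∈ CUT_A := by
      refine ⟨b, ?_, hbC⟩
      simp [List.getLast?_concat]
    obtain ⟨c, hcB, hcp⟩ := hB (q ++ [b]) hpath hlast'
    refine ⟨c, hcB, ?_⟩
    rcases List.mem_append.mp hcp with h' | h'
    · exact List.mem_append.mpr (Or.inl h')
    · simp at h'; subst h'; exact hbp
  -- CUT_A separates itself from s.
  have hself : Separates tl hd s CUT_A CUT_A := by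
    intro p hp ⟨e, he, heC⟩
    obtain ⟨hne, rfl⟩ := List.mem_getLast?_eq_getLast he
    exact ⟨_, heC, List.getLast_mem hne⟩
  have hle : mincut tl hd s CUT_A ≤ CUT_A.card := by
    apply Nat.sInf_le; exact ⟨CUT_A, hself, rfl⟩
  have hge : CUT_A.card ≤ mincut tl hd s CUT_A := by
    apply le_csInf ⟨CUT_A.card, by exact ⟨CUT_A, hself, rfl⟩⟩
    rintro n ⟨B, hB, rfl⟩
    calc CUT_A.card = mincut tl hd s A := hcard
      _ ≤ B.card := Nat.sInf_le (by exact ⟨B, key B hB, rfl⟩)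
  exact le_antisymm hge hle
end

section
/- The relation ∼ on regular edge sets of a finite directed acyclic graph with source s, defined by A ∼ A' iff A and A' have a common minimum cut separating each of them from s, is an equivalence relation; in particular it is transitive. -/
open Finset

/-!
Reflexivity needs only the existence of a minimum cut, and symmetry is immediate. For
transitivity, let `D` be a common minimum cut of `A` and `B`, and `F` one of `B` and `C`;
all four cut values equal a common `m`. Let `Z_D`, `Z_F` be the sets of edges reachable
from `s` avoiding `D`, resp. `F`. The frontier `∂Z` of an edge set `Z` (the edges outside
`Z` that leave `s` or follow an edge of `Z`) is a submodular function of `Z`, with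
`∂Z_D ⊆ D` and `∂Z_F ⊆ F`. Now `∂(Z_D ∩ Z_F)` separates `A` and `C` from `s`, and
`∂(Z_D ∪ Z_F)` separates `B`, so
`m + |∂(Z_D ∩ Z_F)| ≤ |∂(Z_D ∪ Z_F)| + |∂(Z_D ∩ Z_F)| ≤ |D| + |F| = 2m`,
and `∂(Z_D ∩ Z_F)` is a common minimum cut of `A` and `C`.
-/

section EdgeFrontier

variable {V E : Type*} {tl hd : E → V} {s : V}

def reachAvoiding (tl hd : E → V) (s : V) (X : Finset E) : Set E :=
  {e | ∃ p : List E, PathFrom tl hd s p ∧ p.getLast? = some e ∧ ∀ x ∈ X, x ∉ p}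

def StartsAfter (tl hd : E → V) (s : V) (Z : Set E) (e : E) : Prop :=
  tl e = s ∨ ∃ d ∈ Z, hd d = tl e

lemma StartsAfter.mono {Z W : Set E} {e : E} (hZW : Z ⊆ W)
    (h : StartsAfter tl hd s Z e) : StartsAfter tl hd s W e :=
  h.imp_right fun ⟨d, hd, hde⟩ => ⟨d, hZW hd, hde⟩

lemma startsAfter_union {Z W : Set E} {e : E} :
    StartsAfter tl hd s (Z ∪ W) e ↔ StartsAfter tl hd s Z e ∨ StartsAfter tl hd s W e := by
  simp only [StartsAfter, Set.mem_union, or_and_right, exists_or]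
  exact or_or_distrib_left

open Classical in
noncomputable def edgeFrontier [Fintype E] (tl hd : E → V) (s : V) (Z : Set E) : Finset E :=
  univ.filter fun e => e ∉ Z ∧ StartsAfter tl hd s Z e

lemma mem_edgeFrontier [Fintype E] {Z : Set E} {e : E} :
    e ∈ edgeFrontier tl hd s Z ↔ e ∉ Z ∧ StartsAfter tl hd s Z e := by
  classical
  simp [edgeFrontier]

lemma EChain.subset_or_exists_mem_edgeFrontier [Fintype E] {Z : Set E} :
    ∀ {p : List E}, EChain tl hd p → (∀ e ∈ p.head?, StartsAfter tl hd s Z e) →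
      (∀ e ∈ p, e ∈ Z) ∨ ∃ b ∈ edgeFrontier tl hd s Z, b ∈ p
  | [], _, _ => Or.inl (by simp)
  | e :: rest, hchain, hstart => by
    by_cases heZ : e ∈ Z
    · have hrest : ∀ f ∈ rest.head?, StartsAfter tl hd s Z f :=
        fun f hf => Or.inr ⟨e, heZ, (List.isChain_cons.1 hchain).1 f hf⟩
      rcases subset_or_exists_mem_edgeFrontier (List.isChain_cons.1 hchain).2 hrest with
        hsub | ⟨b, hb, hbp⟩
      · exact Or.inl (List.forall_mem_cons.2 ⟨heZ, hsub⟩)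
      · exact Or.inr ⟨b, hb, List.mem_cons_of_mem _ hbp⟩
    · exact Or.inr ⟨e, mem_edgeFrontier.2 ⟨heZ, hstart e rfl⟩, List.mem_cons_self⟩

lemma separates_edgeFrontier [Fintype E] {Z : Set E} {A : Finset E} (hA : ∀ a ∈ A, a ∉ Z) :
    Separates tl hd s A (edgeFrontier tl hd s Z) := by
  rintro p ⟨-, hchain, hhead⟩ ⟨a, hlast, ha⟩
  rcases hchain.subset_or_exists_mem_edgeFrontier fun e he => Or.inl (hhead e he) with
    hsub | hcross
  · exact absurd (hsub a (List.mem_of_mem_getLast? hlast)) (hA a ha)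
  · exact hcross

lemma PathFrom.concat {p : List E} {d e : E} (hp : PathFrom tl hd s p)
    (hlast : p.getLast? = some d) (hde : hd d = tl e) : PathFrom tl hd s (p ++ [e]) := by
  obtain ⟨hne, hchain, hhead⟩ := hp
  refine ⟨by simp, List.isChain_append.2 ⟨hchain, List.isChain_singleton e, ?_⟩, ?_⟩
  · simp_all
  · rwa [List.head?_append_of_ne_nil _ hne]

lemma edgeFrontier_reachAvoiding_subset [Fintype E] (X : Finset E) :
    edgeFrontier tl hd s (reachAvoiding tl hd s X) ⊆ X := by
  intro e he
  obtain ⟨hunreach, hstart⟩ := mem_edgeFrontier.1 he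
  by_contra heX
  apply hunreach
  rcases hstart with hs | ⟨d, ⟨p, hp, hlast, havoid⟩, hde⟩
  · exact ⟨[e], ⟨by simp, List.isChain_singleton e, by simpa using hs⟩, rfl,
      by simpa using heX⟩
  · refine ⟨p ++ [e], hp.concat hlast hde, by simp, fun x hx => ?_⟩
    simp only [List.mem_append, List.mem_singleton, not_or]
    exact ⟨havoid x hx, fun h => heX (h ▸ hx)⟩

lemma Separates.not_mem_reachAvoiding {A X : Finset E} (hX : Separates tl hd s A X) {a : E}
    (ha : a ∈ A) : a ∉ reachAvoiding tl hd s X := by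
  rintro ⟨p, hp, hlast, havoid⟩
  obtain ⟨b, hbX, hbp⟩ := hX p hp ⟨a, hlast, ha⟩
  exact havoid b hbX hbp

lemma card_edgeFrontier_inter_add_card_edgeFrontier_union_le [Fintype E] (Z W : Set E) :
    #(edgeFrontier tl hd s (Z ∩ W)) + #(edgeFrontier tl hd s (Z ∪ W)) ≤
      #(edgeFrontier tl hd s Z) + #(edgeFrontier tl hd s W) := by
  classical
  have hstart_inter (e : E) (h : StartsAfter tl hd s (Z ∩ W) e) :
      StartsAfter tl hd s Z e ∧ StartsAfter tl hd s W e :=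
    ⟨h.mono Set.inter_subset_left, h.mono Set.inter_subset_right⟩
  have hunion : edgeFrontier tl hd s (Z ∩ W) ∪ edgeFrontier tl hd s (Z ∪ W) ⊆
      edgeFrontier tl hd s Z ∪ edgeFrontier tl hd s W := by
    intro e
    have := hstart_inter e
    simp only [mem_union, mem_edgeFrontier, Set.mem_inter_iff, Set.mem_union,
      startsAfter_union]
    tauto
  have hinter : edgeFrontier tl hd s (Z ∩ W) ∩ edgeFrontier tl hd s (Z ∪ W) ⊆
      edgeFrontier tl hd s Z ∩ edgeFrontier tl hd s W := by
    intro e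
    have := hstart_inter e
    simp only [mem_inter, mem_edgeFrontier, Set.mem_inter_iff, Set.mem_union]
    tauto
  rw [← card_union_add_card_inter, ← card_union_add_card_inter (edgeFrontier tl hd s Z)]
  exact Nat.add_le_add (card_le_card hunion) (card_le_card hinter)

end EdgeFrontier

section MinCut

variable {V E : Type*} [Fintype E] {tl hd : E → V} {s : V}

lemma mincut_le_card {A B : Finset E} (h : Separates tl hd s A B) :
    mincut tl hd s A ≤ #B :=
  Nat.sInf_le ⟨B, h, rfl⟩

lemma exists_isMinCut (A : Finset E) : ∃ B, IsMinCut tl hd s A B := by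
  have hne : {n | ∃ B : Finset E, Separates tl hd s A B ∧ #B = n}.Nonempty :=
    ⟨#(univ : Finset E), univ, fun _ _ ⟨a, hlast, _⟩ =>
      ⟨a, mem_univ a, List.mem_of_mem_getLast? hlast⟩, rfl⟩
  obtain ⟨B, hsep, hcard⟩ := Nat.sInf_mem hne
  exact ⟨B, hsep, hcard⟩

lemma equivSets_refl (A : Finset E) : EquivSets tl hd s A A :=
  let ⟨B, hB⟩ := exists_isMinCut A
  ⟨B, hB, hB⟩

lemma EquivSets.symm {A B : Finset E} (h : EquivSets tl hd s A B) : EquivSets tl hd s B A :=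
  let ⟨C, hA, hB⟩ := h
  ⟨C, hB, hA⟩

lemma EquivSets.trans {A B C : Finset E} (hAB : EquivSets tl hd s A B)
    (hBC : EquivSets tl hd s B C) : EquivSets tl hd s A C := by
  obtain ⟨D, ⟨hDA, hDA_card⟩, ⟨hDB, hDB_card⟩⟩ := hAB
  obtain ⟨F, ⟨hFB, hFB_card⟩, ⟨hFC, hFC_card⟩⟩ := hBC
  set ZD := reachAvoiding tl hd s D
  set ZF := reachAvoiding tl hd s F
  have hsepA : Separates tl hd s A (edgeFrontier tl hd s (ZD ∩ ZF)) :=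
    separates_edgeFrontier fun a ha hZ => hDA.not_mem_reachAvoiding ha hZ.1
  have hsepC : Separates tl hd s C (edgeFrontier tl hd s (ZD ∩ ZF)) :=
    separates_edgeFrontier fun a ha hZ => hFC.not_mem_reachAvoiding ha hZ.2
  have hsepB : Separates tl hd s B (edgeFrontier tl hd s (ZD ∪ ZF)) :=
    separates_edgeFrontier fun a ha hZ =>
      hZ.elim (hDB.not_mem_reachAvoiding ha) (hFB.not_mem_reachAvoiding ha)
  have hsubmod : #(edgeFrontier tl hd s (ZD ∩ ZF)) + #(edgeFrontier tl hd s (ZD ∪ ZF)) ≤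
      #D + #F :=
    (card_edgeFrontier_inter_add_card_edgeFrontier_union_le ZD ZF).trans <|
      Nat.add_le_add (card_le_card (edgeFrontier_reachAvoiding_subset D))
        (card_le_card (edgeFrontier_reachAvoiding_subset F))
  have hA := mincut_le_card hsepA
  have hB := mincut_le_card hsepB
  have hC := mincut_le_card hsepC
  exact ⟨_, ⟨hsepA, by omega⟩, ⟨hsepC, by omega⟩⟩

end MinCut

theorem equivSets_equivalence_general {V E : Type*} [Fintype E] (tl hd : E → V) (s : V) :
    (∀ A : Finset E, Regular tl hd s A → EquivSets tl hd s A A) ∧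
    (∀ A A' : Finset E, Regular tl hd s A → Regular tl hd s A' →
      EquivSets tl hd s A A' → EquivSets tl hd s A' A) ∧
    (∀ A B C : Finset E, Regular tl hd s A → Regular tl hd s B → Regular tl hd s C →
      EquivSets tl hd s A B → EquivSets tl hd s B C → EquivSets tl hd s A C) :=
  ⟨fun A _ => equivSets_refl A,
    fun _ _ _ _ h => h.symm,
    fun _ _ _ _ _ _ hAB hBC => hAB.trans hBC⟩

/-- `∼` is an equivalence relation on regular edge sets
(reflexive, symmetric, and transitive). -/
theorem equivSets_equivalence {V E : Type*} [Fintype E] (tl hd : E → V) (s : V)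
    (hacy : Acyclic tl hd) (hsrc : ∀ e : E, hd e ≠ s) :
    (∀ A : Finset E, Regular tl hd s A → EquivSets tl hd s A A) ∧
    (∀ A A' : Finset E, Regular tl hd s A → Regular tl hd s A' →
      EquivSets tl hd s A A' → EquivSets tl hd s A' A) ∧
    (∀ A B C : Finset E, Regular tl hd s A → Regular tl hd s B → Regular tl hd s C →
      EquivSets tl hd s A B → EquivSets tl hd s B C → EquivSets tl hd s A C) :=
  equivSets_equivalence_general tl hd s
end

section
/- Let A₁ and A₂ be regular edge sets in a finite directed acyclic graph with source s such that |A₁| < |A₂|. Then A₁ ≺ A₂ (i.e., some minimum cut between s and A₂ also separates A₁ from s) if and only if mincut(s, A₁ ∪ A₂) = mincut(s, A₂). -/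
open Finset

lemma sep_subset {V E : Type*} (tl hd : E → V) (s : V) {A A' B : Finset E}
    (hsub : A ⊆ A') (h : Separates tl hd s A' B) : Separates tl hd s A B := by
  intro p hp ⟨e, he, heA⟩
  exact h p hp ⟨e, he, hsub heA⟩

lemma sep_self {V E : Type*} (tl hd : E → V) (s : V) (A : Finset E) :
    Separates tl hd s A A := by
  rintro p hp ⟨e, he, heA⟩
  exact ⟨e, heA, List.mem_of_mem_getLast? he⟩

lemma mincut_nonempty {V E : Type*} [Fintype E] (tl hd : E → V) (s : V) (A : Finset E) :
    {n | ∃ B : Finset E, Separates tl hd s A B ∧ B.card = n}.Nonempty :=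
  ⟨A.card, A, sep_self tl hd s A, rfl⟩

lemma exists_mincut {V E : Type*} [Fintype E] (tl hd : E → V) (s : V) (A : Finset E) :
    ∃ B : Finset E, Separates tl hd s A B ∧ B.card = mincut tl hd s A :=
  Nat.sInf_mem (mincut_nonempty tl hd s A)

lemma mincut_le {V E : Type*} [Fintype E] (tl hd : E → V) (s : V) {A B : Finset E}
    (h : Separates tl hd s A B) : mincut tl hd s A ≤ B.card :=
  Nat.sInf_le ⟨B, h, rfl⟩

/-- for regular edge sets with `|A₁| < |A₂|`, `A₁ ≺ A₂` iff
`mincut(s, A₁ ∪ A₂) = mincut(s, A₂)`. -/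
theorem dominates_iff_mincut_union {V E : Type*} [Fintype E] [DecidableEq E]
    (tl hd : E → V) (s : V)
    (hacy : Acyclic tl hd) (hsrc : ∀ e : E, hd e ≠ s)
    (A₁ A₂ : Finset E) (h₁ : Regular tl hd s A₁) (h₂ : Regular tl hd s A₂)
    (hcard : A₁.card < A₂.card) :
    Dominates tl hd s A₁ A₂ ↔ mincut tl hd s (A₁ ∪ A₂) = mincut tl hd s A₂ := by
  constructor
  · rintro ⟨-, C, ⟨hCsep2, hCcard⟩, hCsep1⟩
    have hsepU : Separates tl hd s (A₁ ∪ A₂) C := by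
      rintro p hp ⟨e, he, heA⟩
      rcases Finset.mem_union.1 heA with h | h
      · exact hCsep1 p hp ⟨e, he, h⟩
      · exact hCsep2 p hp ⟨e, he, h⟩
    refine le_antisymm (hCcard ▸ mincut_le tl hd s hsepU) ?_
    obtain ⟨B, hB, hBcard⟩ := exists_mincut tl hd s (A₁ ∪ A₂)
    calc mincut tl hd s A₂ ≤ B.card :=
          mincut_le tl hd s (sep_subset tl hd s (Finset.subset_union_right) hB)
      _ = _ := hBcard
  · intro h
    obtain ⟨B, hB, hBcard⟩ := exists_mincut tl hd s (A₁ ∪ A₂)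
    refine ⟨hcard, B, ⟨sep_subset tl hd s (Finset.subset_union_right) hB, by rw [hBcard, h]⟩,
      sep_subset tl hd s (Finset.subset_union_left) hB⟩
end

section
/- Let t be a non-source node of a finite directed acyclic graph G with source s, n = mincut(s,t), and CUT₁ ≤ CUT₂ two minimum cuts between s and t with CUT₁ separating CUT₂ from s. Then for ANY choice of n edge-disjoint paths P₁, …, P_n from s to t, writing P_i ∩ CUT₁ = {e₁ᵢ} and P_i ∩ CUT₂ = {e₂ᵢ}, one has e₁ᵢ ≤ e₂ᵢ for all i = 1, …, n. -/
open Finset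

/-
Cut the path `P i` right after `e₂`. This prefix is a path from `s` ending in `CUT₂`, so it
meets `CUT₁`. A cut of size `n` meets each of `n` edge-disjoint `s`–`t` paths, hence by
pigeonhole meets each in exactly one edge, and on `P i` that edge is `e₁`. So `e₁` lies on the
prefix ending in `e₂`, which gives `e₁ ≤ e₂`.
-/

theorem EdgeDisjoint.eq_of_mem_of_card_le {E : Type*} {n : ℕ} {P : Fin n → List E}
    (hdisj : EdgeDisjoint P) {C : Finset E} (hmeet : ∀ j, ∃ e ∈ C, e ∈ P j) (hcard : #C ≤ n)
    {i : Fin n} {b c : E} (hb : b ∈ P i) (hc : c ∈ P i) (hbC : b ∈ C) (hcC : c ∈ C) :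
    b = c := by
  choose f hfC hfP using hmeet
  have owner : ∀ j k, f j ∈ P k → j = k := fun j k h =>
    by_contra fun hne => hdisj j k hne (hfP j) h
  have hsurj := surj_on_of_inj_on_of_card_le (s := univ) (fun j _ => f j) (fun j _ => hfC j)
    (fun j k _ _ h => owner j k (h ▸ hfP k)) (by simpa using hcard)
  obtain ⟨j, -, rfl⟩ := hsurj b hbC
  obtain ⟨k, -, rfl⟩ := hsurj c hcC
  rw [owner j i hb, owner k i hc]

theorem PathFrom.exists_prefix_getLast {V E : Type*} {tl hd : E → V} {s : V} {p : List E}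
    (hp : PathFrom tl hd s p) {e : E} (he : e ∈ p) :
    ∃ q, q <+: p ∧ PathFrom tl hd s q ∧ q.getLast? = some e := by
  obtain ⟨l₁, l₂, rfl⟩ := List.append_of_mem he
  have hpre : l₁ ++ [e] <+: l₁ ++ e :: l₂ := ⟨l₂, by simp⟩
  obtain ⟨-, hchain, hhead⟩ := hp
  refine ⟨l₁ ++ [e], hpre, ⟨by simp, hchain.prefix hpre, fun x hx => hhead x ?_⟩, by simp⟩
  cases l₁ <;> simpa using hx

theorem EChain.edgeLe_of_mem {V E : Type*} {tl hd : E → V} {q : List E}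
    (hq : EChain tl hd q) {d e : E} (hdq : d ∈ q) (he : q.getLast? = some e) :
    EdgeLe tl hd d e := by
  obtain ⟨m₁, m₂, rfl⟩ := List.append_of_mem hdq
  refine ⟨d :: m₂, hq.suffix ⟨m₁, rfl⟩, rfl, ?_⟩
  rwa [List.getLast?_append_of_ne_nil _ (List.cons_ne_nil _ _)] at he

theorem cut_le_forall_paths_general {V E : Type*} [Fintype E] (tl hd : E → V) (s t : V)
    (CUT₁ CUT₂ : Finset E)
    (h₁ : IsNodeMinCut tl hd s t CUT₁)
    (hle : Separates tl hd s CUT₂ CUT₁)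
    (P : Fin (nmincut tl hd s t) → List E)
    (hP : ∀ i, NPathFromTo tl hd s t (P i)) (hdisj : EdgeDisjoint P) :
    ∀ i, ∀ e₁ ∈ P i, ∀ e₂ ∈ P i, e₁ ∈ CUT₁ → e₂ ∈ CUT₂ → EdgeLe tl hd e₁ e₂ := by
  intro i e₁ he₁P e₂ he₂P he₁C he₂C
  obtain ⟨q, hqP, hq, hqe₂⟩ := (hP i).1.exists_prefix_getLast he₂P
  obtain ⟨b, hbC, hbq⟩ := hle q hq ⟨e₂, hqe₂, he₂C⟩
  have hbe₁ : b = e₁ := hdisj.eq_of_mem_of_card_le (fun j => h₁.1 (P j) (hP j)) h₁.2.le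
    (hqP.subset hbq) he₁P hbC he₁C
  exact hq.2.1.edgeLe_of_mem (hbe₁ ▸ hbq) hqe₂

/-- if `CUT₁ ≤ CUT₂`, then on ANY choice of `n = mincut(s,t)`
edge-disjoint paths from `s` to `t`, the edge of `CUT₁` precedes (or equals) the
edge of `CUT₂` on each path. -/
theorem cut_le_forall_paths {V E : Type*} [Fintype E] (tl hd : E → V) (s t : V)
    (hacy : Acyclic tl hd) (hsrc : ∀ e : E, hd e ≠ s) (hts : t ≠ s)
    (CUT₁ CUT₂ : Finset E)
    (h₁ : IsNodeMinCut tl hd s t CUT₁) (h₂ : IsNodeMinCut tl hd s t CUT₂)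
    (hle : Separates tl hd s CUT₂ CUT₁)
    (P : Fin (nmincut tl hd s t) → List E)
    (hP : ∀ i, NPathFromTo tl hd s t (P i)) (hdisj : EdgeDisjoint P) :
    ∀ i, ∀ e₁ ∈ P i, ∀ e₂ ∈ P i, e₁ ∈ CUT₁ → e₂ ∈ CUT₂ → EdgeLe tl hd e₁ e₂ :=
  cut_le_forall_paths_general tl hd s t CUT₁ CUT₂ h₁ hle P hP hdisj
end

section
/- For every non-source node t in a finite directed acyclic graph G with source s, there exists a unique primary minimum cut between s and t, i.e., a minimum cut between s and t that separates every minimum cut between s and t from s. -/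
open Finset

/-! ### Auxiliary machinery -/

section Aux

variable {V E : Type*} [Fintype E] (tl hd : E → V) (s t : V)

open Classical in
/-- Edges from `S` to the complement of `S`. -/
noncomputable def Dplus (S : Set V) : Finset E :=
  Finset.univ.filter (fun e => tl e ∈ S ∧ hd e ∉ S)

lemma mem_Dplus {S : Set V} {e : E} :
    e ∈ Dplus tl hd S ↔ tl e ∈ S ∧ hd e ∉ S := by
  classical
  simp [Dplus]

/-- Vertices reachable from `s` avoiding the edge set `C`. -/
def ReachAvoid (C : Finset E) : Set V :=
  {v | v = s ∨ ∃ p : List E, NPathFromTo tl hd s v p ∧ ∀ e ∈ p, e ∉ C}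

variable {tl hd s t}

lemma s_mem_reachAvoid (C : Finset E) : s ∈ ReachAvoid tl hd s C := Or.inl rfl

lemma exists_first_occ {α : Type*} {b : α} :
    ∀ {p : List α}, b ∈ p → ∃ u v, p = u ++ b :: v ∧ b ∉ u := by
  intro p
  induction p with
  | nil => simp
  | cons a l ih =>
    intro hb
    by_cases hab : b = a
    · exact ⟨[], l, by simp [hab], by simp⟩
    · obtain ⟨u, v, rfl, hnu⟩ := ih (by
        rcases List.mem_cons.mp hb with h | h
        · exact absurd h hab
        · exact h)
      exact ⟨a :: u, v, rfl, by simp [hnu, fun h => hab h]⟩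

lemma pathFrom_prefix {p q : List E} (hp : PathFrom tl hd s p) (hq : q <+: p)
    (hne : q ≠ []) : PathFrom tl hd s q := by
  obtain ⟨r, rfl⟩ := hq
  obtain ⟨hne', hch, hhd⟩ := hp
  refine ⟨hne, ?_, ?_⟩
  · exact (List.isChain_append.mp hch).1
  · intro e he
    apply hhd
    obtain ⟨x, q', rfl⟩ := List.exists_cons_of_ne_nil hne
    simpa using he

/-- Crossing lemma: a chain starting inside `S` and ending outside `S`
contains an edge crossing out of `S`. -/
lemma crossing_aux (S : Set V) :
    ∀ (p : List E) (e0 : E), EChain tl hd (e0 :: p) → tl e0 ∈ S →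
      (∀ e ∈ (e0 :: p).getLast?, hd e ∉ S) →
      ∃ e ∈ e0 :: p, tl e ∈ S ∧ hd e ∉ S := by
  intro p
  induction p with
  | nil =>
    intro e0 _ h1 h2
    exact ⟨e0, by simp, h1, h2 e0 (by simp)⟩
  | cons e1 rest ih =>
    intro e0 hch h1 h2
    by_cases hh : hd e0 ∈ S
    · have hch' : EChain tl hd (e1 :: rest) := (List.isChain_cons_cons.mp hch).2
      have h01 : hd e0 = tl e1 := (List.isChain_cons_cons.mp hch).1
      have ht1 : tl e1 ∈ S := h01 ▸ hh
      obtain ⟨e, he, hcr⟩ := ih e1 hch' ht1 (by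
        intro x hx
        exact h2 x (by rw [List.getLast?_cons_cons]; exact hx))
      exact ⟨e, List.mem_cons_of_mem _ he, hcr⟩
    · exact ⟨e0, by simp, h1, hh⟩

lemma crossing_path {S : Set V} {p : List E} (hp : PathFrom tl hd s p)
    (hs : s ∈ S) (hlast : ∀ e ∈ p.getLast?, hd e ∉ S) :
    ∃ e ∈ p, tl e ∈ S ∧ hd e ∉ S := by
  obtain ⟨hne, hch, hhd⟩ := hp
  obtain ⟨e0, rest, rfl⟩ := List.exists_cons_of_ne_nil hne
  have h0 : tl e0 = s := hhd e0 (by simp)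
  exact crossing_aux S rest e0 hch (h0 ▸ hs) hlast

lemma reachAvoid_closed {C : Finset E} {e : E}
    (htl : tl e ∈ ReachAvoid tl hd s C) (heC : e ∉ C) :
    hd e ∈ ReachAvoid tl hd s C := by
  rcases htl with h | ⟨p, ⟨⟨hne, hch, hhd⟩, hlast⟩, havoid⟩
  · refine Or.inr ⟨[e], ⟨⟨by simp, ?_, ?_⟩, ?_⟩, ?_⟩
    · exact List.isChain_singleton e
    · intro x hx; simp at hx; subst hx; exact h
    · intro x hx; simp at hx; subst hx; rfl
    · intro x hx; simp at hx; subst hx; exact heC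
  · refine Or.inr ⟨p ++ [e], ⟨⟨by simp, ?_, ?_⟩, ?_⟩, ?_⟩
    · refine List.isChain_append.mpr ⟨hch, List.isChain_singleton e, ?_⟩
      intro x hx y hy
      simp at hy; subst hy
      exact hlast x hx
    · intro x hx
      apply hhd
      obtain ⟨x0, p', rfl⟩ := List.exists_cons_of_ne_nil hne
      simpa using hx
    · intro x hx
      rw [List.getLast?_concat] at hx
      simp at hx; subst hx; rfl
    · intro x hx
      rcases List.mem_append.mp hx with h' | h'
      · exact havoid x h'
      · simp at h'; subst h'; exact heC

lemma t_notMem_reachAvoid (hts : t ≠ s) {C : Finset E}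
    (hC : NSeparates tl hd s t C) : t ∉ ReachAvoid tl hd s C := by
  rintro (h | ⟨p, hp, havoid⟩)
  · exact hts h
  · obtain ⟨b, hbC, hbp⟩ := hC p hp
    exact havoid b hbp hbC

lemma nSeparates_Dplus {S : Set V} (hs : s ∈ S) (ht : t ∉ S) :
    NSeparates tl hd s t (Dplus tl hd S) := by
  intro p ⟨hp, hlast⟩
  obtain ⟨e, hep, hcr⟩ := crossing_path hp hs (by
    intro x hx
    rw [hlast x hx]
    exact ht)
  exact ⟨e, (mem_Dplus tl hd).mpr hcr, hep⟩

lemma nmincut_le {B : Finset E} (hB : NSeparates tl hd s t B) :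
    nmincut tl hd s t ≤ B.card :=
  Nat.sInf_le ⟨B, hB, rfl⟩

lemma exists_nodeMinCut : ∃ C : Finset E, IsNodeMinCut tl hd s t C := by
  have hne : {n | ∃ B : Finset E, NSeparates tl hd s t B ∧ B.card = n}.Nonempty := by
    refine ⟨(Finset.univ : Finset E).card, Finset.univ, ?_, rfl⟩
    intro p hp
    obtain ⟨b, hb⟩ := List.exists_mem_of_ne_nil p hp.1.1
    exact ⟨b, Finset.mem_univ b, hb⟩
  obtain ⟨B, hB, hBc⟩ := Nat.sInf_mem hne
  exact ⟨B, hB, hBc⟩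

/-- Every minimum node cut is exactly the set of edges crossing out of its
reachable side. -/
lemma minCut_eq_Dplus (hts : t ≠ s) {C : Finset E}
    (hC : IsNodeMinCut tl hd s t C) :
    Dplus tl hd (ReachAvoid tl hd s C) = C := by
  have hsub : Dplus tl hd (ReachAvoid tl hd s C) ⊆ C := by
    intro e he
    obtain ⟨h1, h2⟩ := (mem_Dplus tl hd).mp he
    by_contra heC
    exact h2 (reachAvoid_closed h1 heC)
  have hcut : NSeparates tl hd s t (Dplus tl hd (ReachAvoid tl hd s C)) :=
    nSeparates_Dplus (s_mem_reachAvoid C) (t_notMem_reachAvoid hts hC.1)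
  have hcard : C.card ≤ (Dplus tl hd (ReachAvoid tl hd s C)).card := by
    rw [hC.2]
    exact nmincut_le hcut
  exact Finset.eq_of_subset_of_card_le hsub hcard

lemma Dplus_submod (S1 S2 : Set V) :
    (Dplus tl hd (S1 ∩ S2)).card + (Dplus tl hd (S1 ∪ S2)).card ≤
      (Dplus (E := E) tl hd S1).card + (Dplus tl hd S2).card := by
  classical
  have h1 : Dplus tl hd (S1 ∩ S2) ∪ Dplus tl hd (S1 ∪ S2) ⊆
      Dplus (E := E) tl hd S1 ∪ Dplus tl hd S2 := by
    intro e he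
    rcases Finset.mem_union.mp he with h | h <;>
      · rw [mem_Dplus] at h
        simp only [Finset.mem_union, mem_Dplus]
        simp only [Set.mem_inter_iff, Set.mem_union] at h
        tauto
  have h2 : Dplus tl hd (S1 ∩ S2) ∩ Dplus tl hd (S1 ∪ S2) ⊆
      Dplus (E := E) tl hd S1 ∩ Dplus tl hd S2 := by
    intro e he
    obtain ⟨ha, hb⟩ := Finset.mem_inter.mp he
    rw [mem_Dplus] at ha hb
    simp only [Finset.mem_inter, mem_Dplus]
    simp only [Set.mem_inter_iff, Set.mem_union] at ha hb
    tauto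
  calc (Dplus tl hd (S1 ∩ S2)).card + (Dplus tl hd (S1 ∪ S2)).card
      = (Dplus tl hd (S1 ∩ S2) ∪ Dplus tl hd (S1 ∪ S2)).card +
        (Dplus tl hd (S1 ∩ S2) ∩ Dplus tl hd (S1 ∪ S2)).card :=
        (Finset.card_union_add_card_inter _ _).symm
    _ ≤ (Dplus (E := E) tl hd S1 ∪ Dplus tl hd S2).card +
        (Dplus (E := E) tl hd S1 ∩ Dplus tl hd S2).card :=
        Nat.add_le_add (Finset.card_le_card h1) (Finset.card_le_card h2)
    _ = (Dplus (E := E) tl hd S1).card + (Dplus tl hd S2).card :=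
        Finset.card_union_add_card_inter _ _

/-- Meet of two minimum cuts: a minimum cut separating both from `s`. -/
lemma meet_minCut (hts : t ≠ s) {C1 C2 : Finset E}
    (h1 : IsNodeMinCut tl hd s t C1) (h2 : IsNodeMinCut tl hd s t C2) :
    ∃ C : Finset E, IsNodeMinCut tl hd s t C ∧
      Separates tl hd s C1 C ∧ Separates tl hd s C2 C := by
  set S1 := ReachAvoid tl hd s C1 with hS1
  set S2 := ReachAvoid tl hd s C2 with hS2
  have he1 : Dplus tl hd S1 = C1 := minCut_eq_Dplus hts h1
  have he2 : Dplus tl hd S2 = C2 := minCut_eq_Dplus hts h2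
  have hsmem : s ∈ S1 ∩ S2 := ⟨s_mem_reachAvoid C1, s_mem_reachAvoid C2⟩
  have htnot1 : t ∉ S1 := t_notMem_reachAvoid hts h1.1
  have htnot2 : t ∉ S2 := t_notMem_reachAvoid hts h2.1
  have hcutI : NSeparates tl hd s t (Dplus tl hd (S1 ∩ S2)) :=
    nSeparates_Dplus hsmem (fun h => htnot1 h.1)
  have hcutU : NSeparates tl hd s t (Dplus tl hd (S1 ∪ S2)) :=
    nSeparates_Dplus (Or.inl (s_mem_reachAvoid C1))
      (fun h => h.elim htnot1 htnot2)
  have hI := nmincut_le hcutI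
  have hU := nmincut_le hcutU
  have hsub := Dplus_submod (tl := tl) (hd := hd) S1 S2
  rw [he1, he2, h1.2, h2.2] at hsub
  have hcard : (Dplus tl hd (S1 ∩ S2)).card = nmincut tl hd s t := by omega
  refine ⟨Dplus tl hd (S1 ∩ S2), ⟨hcutI, hcard⟩, ?_, ?_⟩
  · intro p hp hlast
    obtain ⟨e', he'l, he'C⟩ := hlast
    have hd' : hd e' ∉ S1 := by
      rw [← he1, mem_Dplus] at he'C
      exact he'C.2
    obtain ⟨e, hep, hcr⟩ := crossing_path hp hsmem (by
      intro x hx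
      have : x = e' := by
        rw [he'l] at hx
        exact (Option.mem_some_iff.mp hx).symm ▸ rfl
      subst this
      exact fun h => hd' h.1)
    exact ⟨e, (mem_Dplus tl hd).mpr hcr, hep⟩
  · intro p hp hlast
    obtain ⟨e', he'l, he'C⟩ := hlast
    have hd' : hd e' ∉ S2 := by
      rw [← he2, mem_Dplus] at he'C
      exact he'C.2
    obtain ⟨e, hep, hcr⟩ := crossing_path hp hsmem (by
      intro x hx
      have : x = e' := by
        rw [he'l] at hx
        exact (Option.mem_some_iff.mp hx).symm ▸ rfl
      subst this
      exact fun h => hd' h.2)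
    exact ⟨e, (mem_Dplus tl hd).mpr hcr, hep⟩

lemma sep_trans {A B C : Finset E} (hAB : Separates tl hd s A B)
    (hBC : Separates tl hd s B C) : Separates tl hd s A C := by
  intro p hp hlast
  obtain ⟨b, hbB, hbp⟩ := hAB p hp hlast
  obtain ⟨u, v, rfl, _⟩ := exists_first_occ hbp
  have hq : PathFrom tl hd s (u ++ [b]) :=
    pathFrom_prefix hp ⟨v, by simp⟩ (by simp)
  obtain ⟨c, hcC, hcq⟩ := hBC (u ++ [b]) hq ⟨b, by simp [List.getLast?_concat], hbB⟩
  refine ⟨c, hcC, ?_⟩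
  rcases List.mem_append.mp hcq with h | h
  · exact List.mem_append.mpr (Or.inl h)
  · simp at h; subst h
    exact List.mem_append.mpr (Or.inr (by simp))

/-- Every edge of a minimum cut lies on an `s`–`t` path meeting the cut
only in that edge. -/
lemma essential_edge (hC : IsNodeMinCut tl hd s t C) {e : E} (he : e ∈ C) :
    ∃ p : List E, NPathFromTo tl hd s t p ∧ e ∈ p ∧ ∀ x ∈ p, x ∈ C → x = e := by
  classical
  have hnotsep : ¬ NSeparates tl hd s t (C.erase e) := by
    intro hsep
    have h1 := nmincut_le hsep
    have h2 : (C.erase e).card < C.card := Finset.card_erase_lt_of_mem he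
    have h3 := hC.2
    omega
  rw [NSeparates] at hnotsep
  push_neg at hnotsep
  obtain ⟨p, hp, hav⟩ := hnotsep
  have hall : ∀ x ∈ p, x ∈ C → x = e := by
    intro x hx hxC
    by_contra hne
    exact hav x (Finset.mem_erase.mpr ⟨hne, hxC⟩) hx
  obtain ⟨b, hbC, hbp⟩ := hC.1 p hp
  have : b = e := hall b hbp hbC
  exact ⟨p, hp, this ▸ hbp, hall⟩

/-- Antisymmetry of mutual separation among minimum cuts. -/
lemma minCut_sep_antisymm {C1 C2 : Finset E}
    (h1 : IsNodeMinCut tl hd s t C1) (h2 : IsNodeMinCut tl hd s t C2)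
    (h12 : Separates tl hd s C2 C1) (h21 : Separates tl hd s C1 C2) :
    C1 = C2 := by
  have hsub : C2 ⊆ C1 := by
    intro e he2
    by_contra he1
    obtain ⟨p, ⟨hp, _⟩, hep, honly⟩ := essential_edge h2 he2
    obtain ⟨u, v, rfl, henu⟩ := exists_first_occ hep
    -- prefix q1 = u ++ [e] ends in e ∈ C2
    have hq1 : PathFrom tl hd s (u ++ [e]) :=
      pathFrom_prefix hp ⟨v, by simp⟩ (by simp)
    obtain ⟨c, hcC1, hcq1⟩ := h12 (u ++ [e]) hq1
      ⟨e, by simp [List.getLast?_concat], he2⟩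
    have hcu : c ∈ u := by
      rcases List.mem_append.mp hcq1 with h | h
      · exact h
      · simp at h; subst h; exact absurd hcC1 he1
    obtain ⟨a, b', rfl, _⟩ := exists_first_occ hcu
    -- prefix q2 = a ++ [c] ends in c ∈ C1
    have hq2 : PathFrom tl hd s (a ++ [c]) := by
      refine pathFrom_prefix hp ⟨b' ++ e :: v, ?_⟩ (by simp)
      simp
    obtain ⟨x, hxC2, hxq2⟩ := h21 (a ++ [c]) hq2
      ⟨c, by simp [List.getLast?_concat], hcC1⟩
    have hxp : x ∈ (a ++ c :: b') ++ e :: v := by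
      rcases List.mem_append.mp hxq2 with h | h
      · exact List.mem_append.mpr (Or.inl (List.mem_append.mpr (Or.inl h)))
      · simp at h; subst h
        exact List.mem_append.mpr (Or.inl (by simp))
    have hxe : x = e := honly x hxp hxC2
    subst hxe
    -- but e ∉ u = a ++ c :: b'
    apply henu
    rcases List.mem_append.mp hxq2 with h | h
    · exact List.mem_append.mpr (Or.inl h)
    · simp at h; subst h
      exact List.mem_append.mpr (Or.inr (by simp))
  have hcard : C1.card ≤ C2.card := by rw [h1.2, h2.2]
  exact (Finset.eq_of_subset_of_card_le hsub hcard).symm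

end Aux

/-- for every non-source node `t` there exists a unique primary
minimum cut between `s` and `t`. -/
theorem existsUnique_primaryNodeMinCut {V E : Type*} [Fintype E]
    (tl hd : E → V) (s t : V)
    (hacy : Acyclic tl hd) (hsrc : ∀ e : E, hd e ≠ s) (hts : t ≠ s) :
    ∃! C : Finset E, IsPrimaryNodeMinCut tl hd s t C := by
  classical
  -- fold the meet over any finite family of minimum cuts
  have key : ∀ F : Finset (Finset E), (∀ C ∈ F, IsNodeMinCut tl hd s t C) →
      ∃ M : Finset E, IsNodeMinCut tl hd s t M ∧
        ∀ C ∈ F, Separates tl hd s C M := by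
    intro F
    induction F using Finset.induction_on with
    | empty =>
      intro _
      obtain ⟨C, hC⟩ := exists_nodeMinCut (tl := tl) (hd := hd) (s := s) (t := t)
      exact ⟨C, hC, by simp⟩
    | @insert C0 F hC0F ih =>
      intro hF
      obtain ⟨M, hM, hsep⟩ := ih (fun C hC => hF C (Finset.mem_insert_of_mem hC))
      obtain ⟨M', hM', hs1, hs2⟩ :=
        meet_minCut hts hM (hF C0 (Finset.mem_insert_self _ _))
      refine ⟨M', hM', ?_⟩
      intro C hC
      rcases Finset.mem_insert.mp hC with rfl | hC
      · exact hs2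
      · exact sep_trans (hsep C hC) hs1
  obtain ⟨M, hM, hall⟩ := key
    (Finset.univ.filter (fun C => IsNodeMinCut tl hd s t C))
    (fun C hC => (Finset.mem_filter.mp hC).2)
  refine ⟨M, ⟨hM, fun C' hC' => hall C' (Finset.mem_filter.mpr ⟨Finset.mem_univ _, hC'⟩)⟩, ?_⟩
  intro C ⟨hC, hCall⟩
  exact minCut_sep_antisymm hC hM
    (hCall M hM) (hall C (Finset.mem_filter.mpr ⟨Finset.mem_univ _, hC⟩))
end
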